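/- For every prime p different from 2 and 5, π(p) divides p² − 1. -/

import Mathlib

/-- The Pisano period `π(m)`: the least positive integer `k` such that
`F_{n+k} ≡ F_n (mod m)` for all `n ≥ 0`. -/
noncomputable def pisano (m : ℕ) : ℕ :=
  sInf {k : ℕ | 0 < k ∧ ∀ n : ℕ, Nat.fib (n + k) ≡ Nat.fib n [MOD m]}

/-!
For `p ≠ 2, 5` the polynomial `X² - X - 1` has two distinct roots `α, β` in `𝔽_{p²}`, since its
discriminant `5` is nonzero and, like every element of `𝔽_p`, a square in `𝔽_{p²}`. Binet's formula
`(α - β) F_n = αⁿ - βⁿ` together with `α^(p²-1) = β^(p²-1) = 1` makes `p² - 1` a period of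
`F mod p`, and the least positive period of a sequence divides all its periods.
-/

open Function

theorem Function.Periodic.sInf_pos_periods_dvd {α : Type*} {f : ℕ → α} {k : ℕ}
    (hk : Periodic f k) : sInf {c | 0 < c ∧ Periodic f c} ∣ k := by
  rcases k.eq_zero_or_pos with rfl | hk0
  · exact dvd_zero _
  obtain ⟨hπ0, hπ⟩ := Nat.sInf_mem (⟨k, hk0, hk⟩ : ∃ c, 0 < c ∧ Periodic f c)
  set π := sInf {c | 0 < c ∧ Periodic f c}
  have hmod : Periodic f (k % π) := fun n =>
    calc f (n + k % π) = f (n + k % π + k / π * π) := (hπ.nat_mul _ _).symm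
      _ = f (n + k) := by rw [add_assoc, Nat.mod_add_div']
      _ = f n := hk n
  by_contra hndvd
  have hmod0 : 0 < k % π := Nat.pos_of_ne_zero (mt Nat.dvd_of_mod_eq_zero hndvd)
  exact (Nat.mod_lt k hπ0).not_ge (Nat.sInf_le ⟨hmod0, hmod⟩)

-- `a ≡ b [MOD m]` unfolds to `a % m = b % m`: `pisano m` is the least positive period of
-- `n ↦ F_n % m`.
theorem pisano_dvd {m k : ℕ} (hk : ∀ n, Nat.fib (n + k) ≡ Nat.fib n [MOD m]) : pisano m ∣ k :=
  Periodic.sInf_pos_periods_dvd (f := fun n => Nat.fib n % m) hk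

theorem GaloisField.isSquare_algebraMap (p : ℕ) [Fact p.Prime] (x : ZMod p) :
    IsSquare (algebraMap (ZMod p) (GaloisField p 2) x) := by
  have : Fintype (GaloisField p 2) := Fintype.ofFinite _
  have hchar : ringChar (GaloisField p 2) = p := ringChar.eq _ p
  rcases eq_or_ne p 2 with rfl | hp2
  · exact FiniteField.isSquare_of_char_two hchar _
  rcases eq_or_ne x 0 with rfl | hx
  · simp
  have hcard : Fintype.card (GaloisField p 2) / 2 = (p - 1) * ((p + 1) / 2) := by
    rw [Fintype.card_eq_nat_card, GaloisField.card p 2 two_ne_zero]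
    obtain ⟨c, rfl⟩ := (Fact.out : p.Prime).odd_of_ne_two hp2
    rw [show (2 * c + 1 + 1) / 2 = c + 1 by omega, Nat.add_sub_cancel,
      show (2 * c + 1) ^ 2 = 2 * (2 * c * (c + 1)) + 1 by ring]
    omega
  rw [FiniteField.isSquare_iff (by rw [hchar]; exact hp2) (by simpa using hx), hcard, pow_mul,
    ← map_pow, ZMod.pow_card_sub_one_eq_one hx, map_one, one_pow]

theorem sub_mul_fib_eq_pow_sub_pow {R : Type*} [CommRing R] {α β : R} (hsum : α + β = 1)
    (hprod : α * β = -1) (n : ℕ) : (α - β) * Nat.fib n = α ^ n - β ^ n := by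
  induction n using Nat.twoStepInduction with
  | zero => simp
  | one => simp
  | more n ih₀ ih₁ =>
    rw [Nat.fib_add_two, Nat.cast_add]
    linear_combination ih₀ + ih₁ - α ^ n * (α * hsum - hprod) + β ^ n * (β * hsum - hprod)

theorem periodic_natCast_fib_of_pow_eq_one {R : Type*} [CommRing R] [NoZeroDivisors R]
    {α β : R} (hsum : α + β = 1) (hprod : α * β = -1) (hne : α ≠ β) {k : ℕ} (hα : α ^ k = 1)
    (hβ : β ^ k = 1) : Periodic (fun n => (Nat.fib n : R)) k := fun n =>
  mul_left_cancel₀ (sub_ne_zero.2 hne) <| by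
    simp only [sub_mul_fib_eq_pow_sub_pow hsum hprod, pow_add, hα, hβ, mul_one]

theorem FiniteField.periodic_natCast_fib_card_sub_one {K : Type*} [Field K] [Fintype K]
    (h2 : (2 : K) ≠ 0) (h5 : (5 : K) ≠ 0) (h5sq : IsSquare (5 : K)) :
    Periodic (fun n => (Nat.fib n : K)) (Fintype.card K - 1) := by
  obtain ⟨s, hs⟩ := h5sq
  have hsum : (1 + s) / 2 + (1 - s) / 2 = 1 := by field_simp; ring
  have hprod : (1 + s) / 2 * ((1 - s) / 2) = -1 := by field_simp; linear_combination hs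
  have hne : (1 + s) / 2 ≠ (1 - s) / 2 := by
    intro h
    field_simp at h
    have hs0 : s = 0 := (mul_eq_zero.1 (by linear_combination h : 2 * s = 0)).resolve_left h2
    exact h5 (by rw [hs, hs0, mul_zero])
  have hprod0 : (1 + s) / 2 * ((1 - s) / 2) ≠ 0 := hprod ▸ neg_ne_zero.2 one_ne_zero
  exact periodic_natCast_fib_of_pow_eq_one hsum hprod hne
    (pow_card_sub_one_eq_one _ (left_ne_zero_of_mul hprod0))
    (pow_card_sub_one_eq_one _ (right_ne_zero_of_mul hprod0))

/-- for every prime `p ≠ 2, 5`, `π(p) ∣ p² - 1`. -/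
theorem pisano_dvd_sq_sub_one (p : ℕ) (hp : p.Prime) (hp2 : p ≠ 2) (hp5 : p ≠ 5) :
    pisano p ∣ p ^ 2 - 1 := by
  have : Fact p.Prime := ⟨hp⟩
  have : Fintype (GaloisField p 2) := Fintype.ofFinite _
  have h2 : (2 : GaloisField p 2) ≠ 0 := by
    exact_mod_cast CharP.cast_ne_zero_of_ne_of_prime _ Nat.prime_two hp2
  have h5 : (5 : GaloisField p 2) ≠ 0 := by
    exact_mod_cast CharP.cast_ne_zero_of_ne_of_prime _ Nat.prime_five hp5
  have h5sq : IsSquare (5 : GaloisField p 2) := by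
    simpa only [map_ofNat] using GaloisField.isSquare_algebraMap p 5
  have hper := FiniteField.periodic_natCast_fib_card_sub_one h2 h5 h5sq
  rw [Fintype.card_eq_nat_card, GaloisField.card p 2 two_ne_zero] at hper
  exact pisano_dvd fun n => (CharP.natCast_eq_natCast _ p).mp (hper n)
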